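/- Let X ∈ L^r(ℙ;ℝ^d), r > 0, with card(supp ℙ_X) ≥ N and suppose ℙ_X is strongly continuous (assigns no mass to hyperplanes). Then the quadratic distortion D_{N,2}(x) = ∫ min_{1≤i≤N} |ξ − x_i|² dℙ_X(ξ) is differentiable at every N-tuple x = (x_1,…,x_N) with pairwise distinct components, and ∇D_{N,2}(x) = 2(∫_{C_i(Γ^x)} (x_i − ξ) dℙ_X(ξ))_{1≤i≤N}, where (C_i(Γ^x))_i is a Voronoi partition induced by the grid Γ^x = {x_1,…,x_N}. -/

import Mathlib

open MeasureTheory Metric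

open scoped RealInnerProductSpace

/-- The quadratic distortion `D_{N,2}(x) = ∫ min_i |ξ − x_i|² dℙ_X(ξ)` on `(ℝ^d)^N`. -/
noncomputable def distortion2 {d N : ℕ} (μ : Measure (EuclideanSpace ℝ (Fin d)))
    (x : PiLp 2 fun _ : Fin N => EuclideanSpace ℝ (Fin d)) : ℝ :=
  ∫ ξ, ⨅ i : Fin N, ‖ξ - x i‖ ^ 2 ∂μ

lemma aux_sq_diff_le {E : Type*} [NormedAddCommGroup E] (ξ c c' : E) :
    |‖ξ - c‖ ^ 2 - ‖ξ - c'‖ ^ 2| ≤ (2 * ‖ξ‖ + ‖c‖ + ‖c'‖) * ‖c - c'‖ := by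
  have h : ‖ξ - c‖ ^ 2 - ‖ξ - c'‖ ^ 2
      = (‖ξ - c‖ - ‖ξ - c'‖) * (‖ξ - c‖ + ‖ξ - c'‖) := by ring
  rw [h, abs_mul, mul_comm]
  have h1 : |‖ξ - c‖ - ‖ξ - c'‖| ≤ ‖c - c'‖ := by
    have h2 := abs_norm_sub_norm_le (ξ - c) (ξ - c')
    have h3 : (ξ - c) - (ξ - c') = c' - c := by abel
    rwa [h3, norm_sub_rev c' c] at h2
  have h2 : |‖ξ - c‖ + ‖ξ - c'‖| ≤ 2 * ‖ξ‖ + ‖c‖ + ‖c'‖ := by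
    rw [abs_of_nonneg (by positivity)]
    have := norm_sub_le ξ c
    have := norm_sub_le ξ c'
    linarith
  exact mul_le_mul h2 h1 (abs_nonneg _) (by positivity)

set_option maxHeartbeats 1000000 in
/-- Differentiability of the quadratic distortion at an `N`-tuple with pairwise distinct
components, for a strongly continuous distribution `ℙ_X` (no mass on hyperplanes) with
second moment and support of cardinality `≥ N`; the gradient is
`2 (∫_{C_i} (x_i − ξ) dℙ_X(ξ))_i`, where `(C_i)` is a Voronoi partition induced by the grid. -/
theorem stmt11 {d N : ℕ} [NeZero N] (μ : Measure (EuclideanSpace ℝ (Fin d)))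
    [IsProbabilityMeasure μ]
    (hmom : MemLp id 2 μ)
    (hcont : ∀ (v : EuclideanSpace ℝ (Fin d)) (c : ℝ), v ≠ 0 →
      μ {ξ | (inner ℝ v ξ : ℝ) = c} = 0)
    (hsupp : ∃ f : Fin N → EuclideanSpace ℝ (Fin d), Function.Injective f ∧
      ∀ i, ∀ ε > (0 : ℝ), 0 < μ (ball (f i) ε))
    (x : PiLp 2 fun _ : Fin N => EuclideanSpace ℝ (Fin d))
    (hx : Function.Injective x)
    (C : Fin N → Set (EuclideanSpace ℝ (Fin d)))
    (hCmeas : ∀ i, MeasurableSet (C i))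
    (hCdisj : Pairwise (Function.onFun Disjoint C))
    (hCuniv : (⋃ i, C i) = Set.univ)
    (hCvor : ∀ i, C i ⊆ {ξ | ‖ξ - x i‖ = ⨅ j, ‖ξ - x j‖}) :
    HasGradientAt (distortion2 μ)
      ((WithLp.equiv 2 (∀ _ : Fin N, EuclideanSpace ℝ (Fin d))).symm
        fun i => (2 : ℝ) • ∫ ξ in C i, (x i - ξ) ∂μ) x := by
  classical
  haveI : Nonempty (Fin N) := Fin.pos_iff_nonempty.mp (Nat.pos_of_ne_zero (NeZero.ne N))
  set G : PiLp 2 (fun _ : Fin N => EuclideanSpace ℝ (Fin d)) :=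
    (WithLp.equiv 2 (∀ _ : Fin N, EuclideanSpace ℝ (Fin d))).symm
      fun i => (2 : ℝ) • ∫ ξ in C i, (x i - ξ) ∂μ with hGdef
  -- basic integrability facts
  have hIid : Integrable (id : EuclideanSpace ℝ (Fin d) → EuclideanSpace ℝ (Fin d)) μ :=
    hmom.integrable one_le_two
  have hnormint : Integrable (fun ξ : EuclideanSpace ℝ (Fin d) => ‖ξ‖) μ := hIid.norm
  have hsq : ∀ c : EuclideanSpace ℝ (Fin d), Integrable (fun ξ => ‖ξ - c‖ ^ 2) μ := by
    intro c
    have h1 : MemLp (fun ξ : EuclideanSpace ℝ (Fin d) => ξ - c) 2 μ :=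
      hmom.sub (memLp_const c)
    have h2 := h1.integrable_norm_rpow (by norm_num) (by norm_num)
    refine h2.congr (Filter.Eventually.of_forall fun ξ => ?_)
    norm_num [Real.rpow_two]
  have hsubint : ∀ c : EuclideanSpace ℝ (Fin d), Integrable (fun ξ => c - ξ) μ := fun c =>
    (integrable_const c).sub hIid
  have hmeasinf : ∀ y : PiLp 2 (fun _ : Fin N => EuclideanSpace ℝ (Fin d)),
      Measurable fun ξ : EuclideanSpace ℝ (Fin d) => ⨅ j, ‖ξ - y j‖ ^ 2 := fun y =>
    Measurable.iInf fun j => ((measurable_id.sub_const (y j)).norm.pow_const 2)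
  have hinf_nonneg : ∀ (y : PiLp 2 (fun _ : Fin N => EuclideanSpace ℝ (Fin d)))
      (ξ : EuclideanSpace ℝ (Fin d)), 0 ≤ ⨅ j, ‖ξ - y j‖ ^ 2 := fun y ξ =>
    le_ciInf fun j => by positivity
  have hinf_le : ∀ (y : PiLp 2 (fun _ : Fin N => EuclideanSpace ℝ (Fin d)))
      (ξ : EuclideanSpace ℝ (Fin d)) (i : Fin N),
      (⨅ j, ‖ξ - y j‖ ^ 2) ≤ ‖ξ - y i‖ ^ 2 := fun y ξ i =>
    ciInf_le (Finite.bddBelow_range _) i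
  have hinfint : ∀ y : PiLp 2 (fun _ : Fin N => EuclideanSpace ℝ (Fin d)),
      Integrable (fun ξ => ⨅ j, ‖ξ - y j‖ ^ 2) μ := by
    intro y
    refine (hsq (y (Classical.arbitrary _))).mono
      (hmeasinf y).aestronglyMeasurable (Filter.Eventually.of_forall fun ξ => ?_)
    rw [Real.norm_eq_abs, Real.norm_eq_abs, abs_of_nonneg (hinf_nonneg y ξ),
      abs_of_nonneg (by positivity)]
    exact hinf_le y ξ _
  -- splitting integrals along the Voronoi partition
  have hsplit : ∀ f : EuclideanSpace ℝ (Fin d) → ℝ, Integrable f μ →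
      ∫ ξ, f ξ ∂μ = ∑ i, ∫ ξ in C i, f ξ ∂μ := by
    intro f hf
    rw [← setIntegral_univ (f := f), ← hCuniv,
      integral_iUnion hCmeas hCdisj (hCuniv ▸ hf.integrableOn), tsum_fintype]
  -- Voronoi property
  have hvor_le : ∀ i, ∀ ξ ∈ C i, ∀ j, ‖ξ - x i‖ ≤ ‖ξ - x j‖ := fun i ξ hξ j =>
    (hCvor i hξ).le.trans (ciInf_le (Finite.bddBelow_range _) j)
  have hinf_sq_at_x : ∀ i, ∀ ξ ∈ C i, (⨅ j, ‖ξ - x j‖ ^ 2) = ‖ξ - x i‖ ^ 2 := by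
    intro i ξ hξ
    refine le_antisymm (hinf_le x ξ i) (le_ciInf fun j => ?_)
    exact pow_le_pow_left₀ (norm_nonneg _) (hvor_le i ξ hξ j) 2
  -- constants
  set K : ℝ := 2 * (∑ i, ‖x i‖) + 1 with hKdef
  have hsum_nonneg : (0 : ℝ) ≤ ∑ i, ‖x i‖ :=
    Finset.sum_nonneg fun i _ => norm_nonneg _
  have hK1 : (1 : ℝ) ≤ K := by simp only [hKdef]; linarith
  set gf : EuclideanSpace ℝ (Fin d) → ℝ := fun ξ => 2 * ‖ξ‖ + K with hgfdef
  have hgfpos : ∀ ξ, 0 < gf ξ := fun ξ => by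
    have := norm_nonneg ξ; simp only [hgfdef]; linarith
  have hgfint : Integrable gf μ := (hnormint.const_mul 2).add (integrable_const K)
  -- the near-bisector strips
  set Sf : Fin N → Fin N → ℝ → Set (EuclideanSpace ℝ (Fin d)) := fun i j t =>
    {ξ | |‖ξ - x j‖ ^ 2 - ‖ξ - x i‖ ^ 2| ≤ 2 * t * gf ξ} with hSfdef
  have hSmeas : ∀ i j t, MeasurableSet (Sf i j t) := by
    intro i j t
    apply measurableSet_le
    · exact (((measurable_id.sub_const (x j)).norm.pow_const 2).sub
        ((measurable_id.sub_const (x i)).norm.pow_const 2)).abs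
    · exact ((measurable_norm.const_mul 2).add_const K).const_mul (2 * t)
  set m : Fin N → Fin N → ℝ → ℝ := fun i j t => ∫ ξ, (Sf i j t).indicator gf ξ ∂μ with hmdef
  have hind_nonneg : ∀ i j t (ξ : EuclideanSpace ℝ (Fin d)),
      0 ≤ (Sf i j t).indicator gf ξ := fun i j t ξ =>
    Set.indicator_nonneg (fun ζ _ => (hgfpos ζ).le) ξ
  have hmnonneg : ∀ i j t, 0 ≤ m i j t := fun i j t =>
    integral_nonneg (hind_nonneg i j t)
  have hindint : ∀ i j t, Integrable ((Sf i j t).indicator gf) μ := fun i j t =>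
    hgfint.indicator (hSmeas i j t)
  have hmtendsto : ∀ i j, i ≠ j → Filter.Tendsto (fun t => m i j t) (nhds 0) (nhds 0) := by
    intro i j hij
    have hvne : (2 : ℝ) • (x i - x j) ≠ 0 :=
      smul_ne_zero two_ne_zero (sub_ne_zero.2 fun hh => hij (hx hh))
    have hexp : ∀ ξ : EuclideanSpace ℝ (Fin d), ‖ξ - x j‖ ^ 2 - ‖ξ - x i‖ ^ 2
        = ⟪(2 : ℝ) • (x i - x j), ξ⟫ - (‖x i‖ ^ 2 - ‖x j‖ ^ 2) := by
      intro ξ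
      rw [norm_sub_sq_real, norm_sub_sq_real, real_inner_smul_left, inner_sub_left,
        real_inner_comm (x i) ξ, real_inner_comm (x j) ξ]
      ring
    have hplane : μ {ξ : EuclideanSpace ℝ (Fin d) | ‖ξ - x j‖ ^ 2 - ‖ξ - x i‖ ^ 2 = 0} = 0 := by
      have h0 := hcont ((2 : ℝ) • (x i - x j)) (‖x i‖ ^ 2 - ‖x j‖ ^ 2) hvne
      rw [← h0]
      congr 1
      ext ξ
      rw [Set.mem_setOf_eq, Set.mem_setOf_eq, hexp ξ, sub_eq_zero]
    have hae : ∀ᵐ ξ ∂μ, ‖ξ - x j‖ ^ 2 - ‖ξ - x i‖ ^ 2 ≠ 0 := by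
      rw [ae_iff]
      convert hplane using 2
      ext ξ
      simp
    have hDCT := tendsto_integral_filter_of_dominated_convergence (μ := μ)
      (l := nhds (0 : ℝ)) (F := fun t => (Sf i j t).indicator gf) (f := fun _ => (0 : ℝ))
      (bound := gf)
      (Filter.Eventually.of_forall fun t => (hindint i j t).aestronglyMeasurable)
      (Filter.Eventually.of_forall fun t => Filter.Eventually.of_forall fun ξ => by
        rw [Real.norm_eq_abs, abs_of_nonneg (hind_nonneg i j t ξ)]
        exact Set.indicator_le_self' (fun ζ _ => (hgfpos ζ).le) ξ)
      hgfint
      (by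
        filter_upwards [hae] with ξ hξ
        have hδ : 0 < |‖ξ - x j‖ ^ 2 - ‖ξ - x i‖ ^ 2| / (2 * gf ξ) := by
          apply div_pos (abs_pos.2 hξ)
          have := hgfpos ξ
          linarith
        have hev : ∀ᶠ t in nhds (0 : ℝ), ξ ∉ Sf i j t := by
          filter_upwards [Metric.ball_mem_nhds (0 : ℝ) hδ] with t ht hmem
          rw [mem_ball_zero_iff, Real.norm_eq_abs] at ht
          have h1 : (2 : ℝ) * t * gf ξ < |‖ξ - x j‖ ^ 2 - ‖ξ - x i‖ ^ 2| := by
            have h2 : t < |‖ξ - x j‖ ^ 2 - ‖ξ - x i‖ ^ 2| / (2 * gf ξ) :=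
              (le_abs_self t).trans_lt ht
            have h3 := hgfpos ξ
            have h4 : 2 * t * gf ξ
                < 2 * (|‖ξ - x j‖ ^ 2 - ‖ξ - x i‖ ^ 2| / (2 * gf ξ)) * gf ξ :=
              mul_lt_mul_of_pos_right (mul_lt_mul_of_pos_left h2 two_pos) h3
            have h5 : 2 * (|‖ξ - x j‖ ^ 2 - ‖ξ - x i‖ ^ 2| / (2 * gf ξ)) * gf ξ
                = |‖ξ - x j‖ ^ 2 - ‖ξ - x i‖ ^ 2| := by
              field_simp
            calc (2:ℝ) * t * gf ξ < _ := h4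
              _ = _ := h5
          exact absurd hmem (by simp only [hSfdef, Set.mem_setOf_eq, not_le]; exact h1)
        exact Filter.Tendsto.congr' (hev.mono fun t ht => (Set.indicator_of_notMem ht gf).symm)
          tendsto_const_nhds)
    simpa using hDCT
  set η : ℝ → ℝ := fun t => ∑ i, ∑ j ∈ Finset.univ.erase i, m i j t with hηdef
  have hηt : Filter.Tendsto η (nhds 0) (nhds 0) := by
    have h0 : Filter.Tendsto (fun t => ∑ i : Fin N, ∑ j ∈ Finset.univ.erase i, m i j t)
        (nhds 0) (nhds (∑ i : Fin N, ∑ _j ∈ Finset.univ.erase i, (0 : ℝ))) := by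
      refine tendsto_finset_sum _ fun i _ => tendsto_finset_sum _ fun j hj => ?_
      exact hmtendsto i j (Finset.ne_of_mem_erase hj).symm
    simp only [Finset.sum_const_zero] at h0
    exact hηdef ▸ h0
  have hηnonneg : ∀ t, 0 ≤ η t := fun t =>
    Finset.sum_nonneg fun i _ => Finset.sum_nonneg fun j _ => hmnonneg i j t
  -- key pointwise estimate near the Voronoi boundaries
  have key : ∀ (x' : PiLp 2 fun _ : Fin N => EuclideanSpace ℝ (Fin d)) (s : ℝ), 0 ≤ s →
      (∀ j, ‖x' j - x j‖ ≤ s) → (∀ j, ‖x j‖ + ‖x' j‖ ≤ K) →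
      ∀ i, ∀ ξ ∈ C i,
      ‖ξ - x' i‖ ^ 2 - (⨅ j, ‖ξ - x' j‖ ^ 2)
        ≤ ∑ j ∈ Finset.univ.erase i, (Sf i j s).indicator (fun ζ => 2 * s * gf ζ) ξ := by
    intro x' s hs hcl hKb i ξ hξ
    have hind_nonneg' : ∀ j : Fin N, 0 ≤ (Sf i j s).indicator (fun ζ => 2 * s * gf ζ) ξ :=
      fun j => Set.indicator_nonneg (fun ζ _ => mul_nonneg (by linarith) (hgfpos ζ).le) ξ
    obtain ⟨j₀, hj₀⟩ := exists_eq_ciInf_of_finite (f := fun j => ‖ξ - x' j‖ ^ 2)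
    by_cases hji : j₀ = i
    · have hz : ‖ξ - x' i‖ ^ 2 - (⨅ j, ‖ξ - x' j‖ ^ 2) = 0 := by
        rw [← hj₀, hji]; ring
      rw [hz]
      exact Finset.sum_nonneg fun j _ => hind_nonneg' j
    · have hvs : ‖ξ - x i‖ ^ 2 ≤ ‖ξ - x j₀‖ ^ 2 :=
        pow_le_pow_left₀ (norm_nonneg _) (hvor_le i ξ hξ j₀) 2
      have hb1 : ∀ j : Fin N, |‖ξ - x' j‖ ^ 2 - ‖ξ - x j‖ ^ 2| ≤ s * gf ξ := by
        intro j
        refine (aux_sq_diff_le ξ (x' j) (x j)).trans ?_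
        rw [mul_comm s (gf ξ)]
        refine mul_le_mul ?_ (hcl j) (norm_nonneg _) (hgfpos ξ).le
        have hKj := hKb j
        simp only [hgfdef]
        linarith
      have ha1 := abs_le.1 (hb1 i)
      have ha2 := abs_le.1 (hb1 j₀)
      have hmin : ‖ξ - x' j₀‖ ^ 2 ≤ ‖ξ - x' i‖ ^ 2 := hj₀ ▸ hinf_le x' ξ i
      have hdiff : ‖ξ - x' i‖ ^ 2 - (⨅ j, ‖ξ - x' j‖ ^ 2) ≤ 2 * s * gf ξ := by
        rw [← hj₀]
        linarith [ha1.1, ha1.2, ha2.1, ha2.2, hvs]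
      have h2sg : 0 ≤ 2 * s * gf ξ := mul_nonneg (by linarith) (hgfpos ξ).le
      have hmem : ξ ∈ Sf i j₀ s := by
        simp only [hSfdef, Set.mem_setOf_eq, abs_le]
        constructor
        · linarith [hvs]
        · linarith [ha1.2, ha2.1, hmin]
      calc ‖ξ - x' i‖ ^ 2 - (⨅ j, ‖ξ - x' j‖ ^ 2) ≤ 2 * s * gf ξ := hdiff
        _ = (Sf i j₀ s).indicator (fun ζ => 2 * s * gf ζ) ξ :=
            (Set.indicator_of_mem hmem (fun ζ => 2 * s * gf ζ)).symm
        _ ≤ ∑ j ∈ Finset.univ.erase i, (Sf i j s).indicator (fun ζ => 2 * s * gf ζ) ξ :=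
            Finset.single_le_sum (fun j _ => hind_nonneg' j)
              (Finset.mem_erase.2 ⟨hji, Finset.mem_univ _⟩)
  -- main quantitative estimate
  have main : ∀ x' : PiLp 2 fun _ : Fin N => EuclideanSpace ℝ (Fin d), ‖x' - x‖ ≤ 1 →
      |distortion2 μ x' - distortion2 μ x - ⟪G, x' - x⟫|
        ≤ ‖x' - x‖ ^ 2 + 2 * ‖x' - x‖ * η ‖x' - x‖ := by
    intro x' hle1
    set s : ℝ := ‖x' - x‖ with hsdef
    have hs0 : 0 ≤ s := norm_nonneg _
    have hnormsq : s ^ 2 = ∑ i, ‖x' i - x i‖ ^ 2 := by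
      rw [hsdef, PiLp.norm_sq_eq_of_L2]
      exact Finset.sum_congr rfl fun i _ => by rw [PiLp.sub_apply]
    have hcl : ∀ j, ‖x' j - x j‖ ≤ s := by
      intro j
      have h1 : ‖x' j - x j‖ ^ 2 ≤ s ^ 2 := by
        rw [hnormsq]
        exact Finset.single_le_sum (f := fun i => ‖x' i - x i‖ ^ 2)
          (fun i _ => sq_nonneg _) (Finset.mem_univ j)
      exact (pow_le_pow_iff_left₀ (norm_nonneg _) hs0 two_ne_zero).1 h1
    have hKb : ∀ j, ‖x j‖ + ‖x' j‖ ≤ K := by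
      intro j
      have h1 : ‖x' j‖ - ‖x j‖ ≤ ‖x' j - x j‖ := norm_sub_norm_le _ _
      have h2 : ‖x j‖ ≤ ∑ i, ‖x i‖ :=
        Finset.single_le_sum (fun i _ => norm_nonneg _) (Finset.mem_univ j)
      have h3 := hcl j
      simp only [hKdef]
      linarith
    have hAint : ∀ i, IntegrableOn (fun ξ => ‖ξ - x' i‖ ^ 2) (C i) μ := fun i =>
      (hsq (x' i)).integrableOn
    have hBint : ∀ i, IntegrableOn (fun ξ => ⨅ j, ‖ξ - x' j‖ ^ 2) (C i) μ := fun i =>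
      (hinfint x').integrableOn
    have hindint2 : ∀ i j, Integrable ((Sf i j s).indicator fun ζ => 2 * s * gf ζ) μ :=
      fun i j => (hgfint.const_mul (2 * s)).indicator (hSmeas i j s)
    have h1 : ∀ i, (∫ ξ in C i, (⨅ j, ‖ξ - x' j‖ ^ 2) ∂μ) ≤ ∫ ξ in C i, ‖ξ - x' i‖ ^ 2 ∂μ :=
      fun i => setIntegral_mono_on (hBint i) (hAint i) (hCmeas i) fun ξ _ => hinf_le x' ξ i
    have h2 : ∀ i, (∫ ξ in C i, ‖ξ - x' i‖ ^ 2 ∂μ) - (∫ ξ in C i, (⨅ j, ‖ξ - x' j‖ ^ 2) ∂μ)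
        ≤ ∑ j ∈ Finset.univ.erase i, 2 * s * m i j s := by
      intro i
      rw [← integral_sub (hAint i) (hBint i)]
      have hstep : (∫ ξ in C i, (‖ξ - x' i‖ ^ 2 - ⨅ j, ‖ξ - x' j‖ ^ 2) ∂μ)
          ≤ ∫ ξ in C i, (∑ j ∈ Finset.univ.erase i,
              (Sf i j s).indicator (fun ζ => 2 * s * gf ζ) ξ) ∂μ := by
        refine setIntegral_mono_on ((hAint i).sub (hBint i))
          (integrable_finset_sum _ fun j _ => (hindint2 i j).integrableOn) (hCmeas i) ?_
        intro ξ hξ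
        exact key x' s hs0 hcl hKb i ξ hξ
      refine hstep.trans ?_
      rw [integral_finset_sum _ fun j _ => (hindint2 i j).integrableOn]
      refine Finset.sum_le_sum fun j hj => ?_
      have hnn : 0 ≤ᵐ[μ] (Sf i j s).indicator fun ζ => 2 * s * gf ζ :=
        Filter.Eventually.of_forall fun ξ =>
          Set.indicator_nonneg (fun ζ _ => mul_nonneg (by linarith) (hgfpos ζ).le) ξ
      refine (setIntegral_le_integral (hindint2 i j) hnn).trans_eq ?_
      have hfold : ∀ ξ : EuclideanSpace ℝ (Fin d),
          (Sf i j s).indicator (fun ζ => 2 * s * gf ζ) ξ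
            = 2 * s * (Sf i j s).indicator gf ξ := fun ξ =>
        Set.indicator_const_mul (Sf i j s) gf (2 * s) ξ
      rw [hmdef]
      simp only
      simp_rw [hfold]
      rw [integral_const_mul]
    have h3 : ∀ i, (∫ ξ in C i, ‖ξ - x' i‖ ^ 2 ∂μ)
        = (∫ ξ in C i, ‖ξ - x i‖ ^ 2 ∂μ)
          + (2 * ⟪∫ ξ in C i, (x i - ξ) ∂μ, x' i - x i⟫
            + ‖x' i - x i‖ ^ 2 * (μ (C i)).toReal) := by
      intro i
      have hpt : ∀ ξ : EuclideanSpace ℝ (Fin d), ‖ξ - x' i‖ ^ 2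
          = ‖ξ - x i‖ ^ 2 + (2 * ⟪x i - ξ, x' i - x i⟫ + ‖x' i - x i‖ ^ 2) := by
        intro ξ
        have h4 : ξ - x' i = (ξ - x i) - (x' i - x i) := by abel
        rw [h4, norm_sub_sq_real]
        have h5 : ⟪x i - ξ, x' i - x i⟫ = -⟪ξ - x i, x' i - x i⟫ := by
          rw [← inner_neg_left, neg_sub]
        rw [h5]; ring
      rw [setIntegral_congr_fun (hCmeas i) fun ξ _ => hpt ξ]
      have hg1 : IntegrableOn (fun ξ => 2 * ⟪x i - ξ, x' i - x i⟫) (C i) μ :=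
        (((hsubint (x i)).inner_const (x' i - x i)).const_mul 2).integrableOn
      have hg2 : IntegrableOn (fun _ : EuclideanSpace ℝ (Fin d) => ‖x' i - x i‖ ^ 2) (C i) μ :=
        (integrable_const _).integrableOn
      have hgsum : IntegrableOn
          (fun ξ => 2 * ⟪x i - ξ, x' i - x i⟫ + ‖x' i - x i‖ ^ 2) (C i) μ := hg1.add hg2
      rw [integral_add (hsq (x i)).integrableOn hgsum]
      congr 1
      rw [integral_add hg1 hg2]
      congr 1
      · rw [integral_const_mul]
        congr 1
        calc (∫ ξ in C i, ⟪x i - ξ, x' i - x i⟫ ∂μ)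
            = ∫ ξ in C i, ⟪x' i - x i, x i - ξ⟫ ∂μ := by
              simp_rw [real_inner_comm]
          _ = ⟪x' i - x i, ∫ ξ in C i, (x i - ξ) ∂μ⟫ :=
              integral_inner (hsubint (x i)).integrableOn _
          _ = ⟪∫ ξ in C i, (x i - ξ) ∂μ, x' i - x i⟫ := real_inner_comm _ _
      · rw [setIntegral_const, smul_eq_mul, mul_comm]; rfl
    have hip : ⟪G, x' - x⟫ = ∑ i, 2 * ⟪∫ ξ in C i, (x i - ξ) ∂μ, x' i - x i⟫ := by
      rw [PiLp.inner_apply]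
      refine Finset.sum_congr rfl fun i _ => ?_
      rw [hGdef]
      simp only [WithLp.equiv_symm_apply, PiLp.toLp_apply]
      rw [real_inner_smul_left, PiLp.sub_apply]
    have hDx' : distortion2 μ x' = ∑ i, ∫ ξ in C i, (⨅ j, ‖ξ - x' j‖ ^ 2) ∂μ :=
      hsplit _ (hinfint x')
    have hDx : distortion2 μ x = ∑ i, ∫ ξ in C i, ‖ξ - x i‖ ^ 2 ∂μ := by
      have h0 : distortion2 μ x = ∑ i, ∫ ξ in C i, (⨅ j, ‖ξ - x j‖ ^ 2) ∂μ :=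
        hsplit _ (hinfint x)
      rw [h0]
      exact Finset.sum_congr rfl fun i _ =>
        setIntegral_congr_fun (hCmeas i) fun ξ hξ => hinf_sq_at_x i ξ hξ
    have hPpos : (0 : ℝ) ≤ ∑ i, ((∫ ξ in C i, ‖ξ - x' i‖ ^ 2 ∂μ)
        - ∫ ξ in C i, (⨅ j, ‖ξ - x' j‖ ^ 2) ∂μ) :=
      Finset.sum_nonneg fun i _ => sub_nonneg.2 (h1 i)
    have hPle : (∑ i, ((∫ ξ in C i, ‖ξ - x' i‖ ^ 2 ∂μ)
        - ∫ ξ in C i, (⨅ j, ‖ξ - x' j‖ ^ 2) ∂μ)) ≤ 2 * s * η s := by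
      refine (Finset.sum_le_sum fun i _ => h2 i).trans_eq ?_
      rw [hηdef]
      simp only
      rw [Finset.mul_sum]
      exact Finset.sum_congr rfl fun i _ => (Finset.mul_sum _ _ _).symm
    have hQpos : (0 : ℝ) ≤ ∑ i, ‖x' i - x i‖ ^ 2 * (μ (C i)).toReal :=
      Finset.sum_nonneg fun i _ => mul_nonneg (sq_nonneg _) ENNReal.toReal_nonneg
    have hQle : (∑ i, ‖x' i - x i‖ ^ 2 * (μ (C i)).toReal) ≤ s ^ 2 := by
      rw [hnormsq]
      refine Finset.sum_le_sum fun i _ => ?_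
      have hμ : (μ (C i)).toReal ≤ 1 := by
        have hle := prob_le_one (μ := μ) (s := C i)
        simpa using ENNReal.toReal_mono ENNReal.one_ne_top hle
      nlinarith [sq_nonneg ‖x' i - x i‖]
    have hkey : distortion2 μ x' - distortion2 μ x - ⟪G, x' - x⟫
        = (∑ i, ‖x' i - x i‖ ^ 2 * (μ (C i)).toReal)
          - ∑ i, ((∫ ξ in C i, ‖ξ - x' i‖ ^ 2 ∂μ)
            - ∫ ξ in C i, (⨅ j, ‖ξ - x' j‖ ^ 2) ∂μ) := by
      rw [hDx', hDx, hip]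
      have hrw : ∀ i, (∫ ξ in C i, (⨅ j, ‖ξ - x' j‖ ^ 2) ∂μ)
          = (∫ ξ in C i, ‖ξ - x i‖ ^ 2 ∂μ)
            + 2 * ⟪∫ ξ in C i, (x i - ξ) ∂μ, x' i - x i⟫
            + ‖x' i - x i‖ ^ 2 * (μ (C i)).toReal
            - ((∫ ξ in C i, ‖ξ - x' i‖ ^ 2 ∂μ)
              - ∫ ξ in C i, (⨅ j, ‖ξ - x' j‖ ^ 2) ∂μ) := by
        intro i
        have := h3 i
        linarith
      rw [Finset.sum_congr rfl fun i _ => hrw i]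
      rw [Finset.sum_sub_distrib, Finset.sum_add_distrib, Finset.sum_add_distrib]
      ring
    rw [hkey, abs_le]
    have hsη : 0 ≤ 2 * s * η s := mul_nonneg (by linarith) (hηnonneg s)
    constructor
    · have := sq_nonneg s
      linarith
    · linarith
  -- conclusion
  rw [hasGradientAt_iff_isLittleO, Asymptotics.isLittleO_iff]
  intro ε hε
  have ht1 : Filter.Tendsto
      (fun x' : PiLp 2 fun _ : Fin N => EuclideanSpace ℝ (Fin d) => ‖x' - x‖)
      (nhds x) (nhds 0) := by
    have hcont' : Continuous
        fun x' : PiLp 2 fun _ : Fin N => EuclideanSpace ℝ (Fin d) => ‖x' - x‖ :=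
      (continuous_id.sub continuous_const).norm
    have h0 := hcont'.tendsto x
    simpa using h0
  have ht2 : Filter.Tendsto
      (fun x' : PiLp 2 fun _ : Fin N => EuclideanSpace ℝ (Fin d) =>
        ‖x' - x‖ + 2 * η ‖x' - x‖) (nhds x) (nhds 0) := by
    have h0 := ht1.add ((hηt.comp ht1).const_mul 2)
    simpa using h0
  have hev1 : ∀ᶠ x' in nhds x, ‖x' - x‖ ≤ 1 := ht1.eventually (eventually_le_nhds one_pos)
  have hev2 : ∀ᶠ x' in nhds x,
      ‖x' - x‖ + 2 * η ‖x' - x‖ ≤ ε := ht2.eventually (eventually_le_nhds hε)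
  filter_upwards [hev1, hev2] with x' hx1 hx2
  have hm := main x' hx1
  rw [Real.norm_eq_abs]
  calc |distortion2 μ x' - distortion2 μ x - ⟪G, x' - x⟫|
      ≤ ‖x' - x‖ ^ 2 + 2 * ‖x' - x‖ * η ‖x' - x‖ := hm
    _ = ‖x' - x‖ * (‖x' - x‖ + 2 * η ‖x' - x‖) := by ring
    _ ≤ ‖x' - x‖ * ε := mul_le_mul_of_nonneg_left hx2 (norm_nonneg _)
    _ = ε * ‖x' - x‖ := mul_comm _ _
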